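/- arXiv:2407.10232 — 2 statements merged into one kernel-verified Lean document; each statement's English description precedes it below -/
import Mathlib

section
/- Every GWNC ring is a weakly clean ring. -/
def IsWeaklyNilCleanElem {R : Type*} [Ring R] (a : R) : Prop :=
  ∃ e q : R, IsIdempotentElem e ∧ IsNilpotent q ∧ (a = q + e ∨ a = q - e)

/-- A ring is GWNC if every non-unit is weakly nil-clean. -/
def IsGWNCRing (R : Type*) [Ring R] : Prop :=
  ∀ a : R, ¬IsUnit a → IsWeaklyNilCleanElem a

def IsWeaklyCleanElem {R : Type*} [Ring R] (a : R) : Prop :=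
  ∃ e : R, IsIdempotentElem e ∧ (IsUnit (a - e) ∨ IsUnit (a + e))

section

variable {R : Type*} [Ring R]

theorem IsUnit.isWeaklyCleanElem {a : R} (ha : IsUnit a) : IsWeaklyCleanElem a :=
  ⟨0, .zero, .inl (by rwa [sub_zero])⟩

theorem IsWeaklyNilCleanElem.isWeaklyCleanElem {a : R} (ha : IsWeaklyNilCleanElem a) :
    IsWeaklyCleanElem a := by
  obtain ⟨e, q, he, hq, rfl | rfl⟩ := ha
  · refine ⟨1 - e, he.one_sub, .inr ?_⟩
    have hsum : q + e + (1 - e) = 1 + q := by abel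
    exact hsum ▸ hq.isUnit_one_add
  · refine ⟨1 - e, he.one_sub, .inl ?_⟩
    have hdiff : q - e - (1 - e) = q - 1 := by abel
    exact hdiff ▸ hq.isUnit_sub_one

end

theorem isWeaklyClean_of_isGWNC {R : Type*} [Ring R] (h : IsGWNCRing R) :
    ∀ a : R, IsWeaklyCleanElem a := by
  intro a
  by_cases ha : IsUnit a
  · exact ha.isWeaklyCleanElem
  · exact (h a ha).isWeaklyCleanElem
end

section
/- A ring R is GWNC if and only if the Jacobson radical J(R) is nil and the quotient ring R/J(R) is GWNC. -/
/-!
Both directions go through the quotient map `π : R → R/J(R)`. Weak nil-cleanness passes to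
images, and non-units of `R` map to non-units of `R/J(R)`, so `R/J(R)` inherits the GWNC property.
A weakly nil-clean `x = q ± e` lying in `J(R)` has `π e = ∓ π q` nilpotent, so the idempotent `e`
lies in `J(R)` and is `0`; hence `x = q` is nilpotent and `J(R)` is nil. Conversely, modulo a nil
ideal units, nilpotents and idempotents all lift, so a weakly nil-clean decomposition of `π a`
lifts to one of `a`.
-/

section NilKernel

variable {R S : Type*} [Ring R] [Ring S] {f : R →+* S}

theorem isNilpotent_of_isNilpotent_map (hker : ∀ x ∈ RingHom.ker f, IsNilpotent x) {x : R}
    (hx : IsNilpotent (f x)) : IsNilpotent x := by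
  obtain ⟨n, hn⟩ := hx
  obtain ⟨m, hm⟩ := hker (x ^ n) (by rwa [RingHom.mem_ker, map_pow])
  exact ⟨n * m, by rw [pow_mul, hm]⟩

theorem isUnit_of_isUnit_map (hf : Function.Surjective f)
    (hker : ∀ x ∈ RingHom.ker f, IsNilpotent x) {a : R} (ha : IsUnit (f a)) : IsUnit a := by
  obtain ⟨b, hb⟩ := hf ↑ha.unit⁻¹
  -- `c ≡ 1` modulo the nil kernel makes `c = 1 - (1 - c)` a unit
  have isUnit_of_map_eq_one : ∀ c : R, f c = 1 → IsUnit c := fun c hc => by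
    simpa using (hker (1 - c) (by rw [RingHom.mem_ker, map_sub, map_one, hc, sub_self])
      ).isUnit_one_sub
  obtain ⟨u, hu⟩ := isUnit_of_map_eq_one (a * b) (by rw [map_mul, hb, ha.mul_val_inv])
  obtain ⟨v, hv⟩ := isUnit_of_map_eq_one (b * a) (by rw [map_mul, hb, ha.val_inv_mul])
  refine isUnit_iff_exists_and_exists.2 ⟨⟨b * ↑u⁻¹, ?_⟩, ⟨↑v⁻¹ * b, ?_⟩⟩
  · rw [← mul_assoc, ← hu, u.mul_inv]
  · rw [mul_assoc, ← hv, v.inv_mul]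

end NilKernel

section WeaklyNilClean

variable {R S : Type*} [Ring R] [Ring S]

theorem IsWeaklyNilCleanElem.map {F : Type*} [FunLike F R S] [RingHomClass F R S] (f : F)
    {a : R} (ha : IsWeaklyNilCleanElem a) : IsWeaklyNilCleanElem (f a) := by
  obtain ⟨e, q, he, hq, rfl | rfl⟩ := ha
  · exact ⟨f e, f q, he.map f, hq.map f, .inl (map_add f q e)⟩
  · exact ⟨f e, f q, he.map f, hq.map f, .inr (map_sub f q e)⟩

theorem IsWeaklyNilCleanElem.of_map {f : R →+* S} (hf : Function.Surjective f)
    (hker : ∀ x ∈ RingHom.ker f, IsNilpotent x) {a : R} (ha : IsWeaklyNilCleanElem (f a)) :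
    IsWeaklyNilCleanElem a := by
  obtain ⟨e', q', he', hq', hc⟩ := ha
  obtain ⟨e, he, rfl⟩ := exists_isIdempotentElem_eq_of_ker_isNilpotent f hker e' (hf e') he'
  rcases hc with hc | hc
  · refine ⟨e, a - e, he, isNilpotent_of_isNilpotent_map hker ?_,
      .inl (sub_add_cancel a e).symm⟩
    rwa [map_sub, hc, add_sub_cancel_right]
  · refine ⟨e, a + e, he, isNilpotent_of_isNilpotent_map hker ?_,
      .inr (add_sub_cancel_right a e).symm⟩
    rwa [map_add, hc, sub_add_cancel]

theorem IsGWNCRing.of_surjective {f : R →+* S} (hf : Function.Surjective f) (h : IsGWNCRing R) :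
    IsGWNCRing S := by
  intro b hb
  obtain ⟨a, rfl⟩ := hf b
  exact (h a fun ha => hb (ha.map f)).map f

theorem IsGWNCRing.of_surjective_of_ker_nil {f : R →+* S} (hf : Function.Surjective f)
    (hker : ∀ x ∈ RingHom.ker f, IsNilpotent x) (h : IsGWNCRing S) : IsGWNCRing R :=
  fun a ha => .of_map hf hker (h (f a) fun hfa => ha (isUnit_of_isUnit_map hf hker hfa))

end WeaklyNilClean

section Jacobson

variable {R : Type*} [Ring R]

theorem TwoSidedIdeal.mk'_eq_zero_iff {I : TwoSidedIdeal R} {x : R} :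
    I.ringCon.mk' x = 0 ↔ x ∈ I := by
  rw [← TwoSidedIdeal.mem_ker, TwoSidedIdeal.ker_ringCon_mk']

theorem IsIdempotentElem.eq_zero_of_mem_jacobson_bot {e : R} (he : IsIdempotentElem e)
    (hJ : e ∈ (⊥ : TwoSidedIdeal R).jacobson) : e = 0 := by
  obtain ⟨z, hzJ⟩ := TwoSidedIdeal.mem_jacobson_iff.1 hJ (-1)
  have hz : z * (1 - e) = 1 := by
    rw [TwoSidedIdeal.mem_bot, sub_eq_zero] at hzJ
    rw [mul_sub, mul_one, ← hzJ]
    noncomm_ring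
  calc e = z * (1 - e) * e := by rw [hz, one_mul]
    _ = 0 := by rw [mul_assoc, sub_mul, one_mul, he.eq, sub_self, mul_zero]

theorem IsWeaklyNilCleanElem.isNilpotent_of_mem_jacobson_bot {x : R}
    (hx : IsWeaklyNilCleanElem x) (hJ : x ∈ (⊥ : TwoSidedIdeal R).jacobson) : IsNilpotent x := by
  set π := (⊥ : TwoSidedIdeal R).jacobson.ringCon.mk'
  obtain ⟨e, q, he, hq, hc⟩ := hx
  have hπx : π x = 0 := TwoSidedIdeal.mk'_eq_zero_iff.2 hJ
  have hπe : IsNilpotent (π e) := by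
    rcases hc with rfl | rfl
    · rw [map_add] at hπx
      rw [eq_neg_of_add_eq_zero_right hπx]
      exact (hq.map π).neg
    · rw [map_sub, sub_eq_zero] at hπx
      rw [← hπx]
      exact hq.map π
  have he0 : e = 0 := he.eq_zero_of_mem_jacobson_bot
    (TwoSidedIdeal.mk'_eq_zero_iff.1 ((he.map π).eq_zero_of_isNilpotent hπe))
  rcases hc with rfl | rfl <;> simpa [he0] using hq

theorem IsGWNCRing.isNilpotent_of_mem_jacobson_bot (h : IsGWNCRing R) {x : R}
    (hJ : x ∈ (⊥ : TwoSidedIdeal R).jacobson) : IsNilpotent x := by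
  by_cases hx : IsUnit x
  · -- then `1 = x⁻¹ * x` is an idempotent in `J(R)`, so `R` is the zero ring
    have h1 : (1 : R) = 0 := IsIdempotentElem.one.eq_zero_of_mem_jacobson_bot
      (hx.val_inv_mul ▸ TwoSidedIdeal.mul_mem_left _ _ _ hJ)
    exact ⟨1, by rw [pow_one, ← mul_one x, h1, mul_zero]⟩
  · exact (h x hx).isNilpotent_of_mem_jacobson_bot hJ

end Jacobson

/-- `R` is GWNC iff the Jacobson radical `J(R)` is nil and `R/J(R)` is GWNC. -/
theorem isGWNC_iff_jacobson_nil_and_quotient_isGWNC {R : Type*} [Ring R] :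
    IsGWNCRing R ↔
      (∀ x ∈ (⊥ : TwoSidedIdeal R).jacobson, IsNilpotent x) ∧
        IsGWNCRing (⊥ : TwoSidedIdeal R).jacobson.ringCon.Quotient := by
  have hπ := (⊥ : TwoSidedIdeal R).jacobson.ringCon.mk'_surjective
  constructor
  · exact fun h => ⟨fun x => h.isNilpotent_of_mem_jacobson_bot, h.of_surjective hπ⟩
  · rintro ⟨hnil, hquot⟩
    exact hquot.of_surjective_of_ker_nil hπ fun x hx =>
      hnil x (TwoSidedIdeal.mk'_eq_zero_iff.1 (RingHom.mem_ker.1 hx))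
end
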